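/- arXiv:1709.07691 — 2 statements merged into one kernel-verified Lean document; each statement's English description precedes it below -/
import Mathlib

section
/- Let X and Y be positive semidefinite operators on a finite-dimensional Hilbert space, with Y positive definite. Then ‖X^{1/2} Y^{-1} X^{1/2} − 𝟙‖ ≤ (1/λ_min(Y)) · ‖X − Y‖, where λ_min(Y) is the smallest eigenvalue of Y and ‖·‖ denotes the operator norm. -/
/-! With `R = Y^{-1/2}` and `A = R X^{1/2}`, the matrix `X^{1/2} Y⁻¹ X^{1/2} - 1 = AᴴA - 1` has the
same spectrum as `AAᴴ - 1 = R (X - Y) R`; both are Hermitian, so they have the same operator norm,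
which is at most `‖R‖² ‖X - Y‖ = ‖Y⁻¹‖ ‖X - Y‖ = λ_min(Y)⁻¹ ‖X - Y‖`. -/

open scoped Matrix.Norms.L2Operator ComplexOrder

namespace Matrix.PosSemidef

/-- The positive semidefinite square root of a positive semidefinite matrix
(restored: removed from Mathlib in favour of `CFC.sqrt`). -/
noncomputable def sqrt {𝕜 : Type*} [RCLike 𝕜] {n : Type*} [Fintype n] [DecidableEq n]
    {A : Matrix n n 𝕜} (hA : A.PosSemidef) : Matrix n n 𝕜 :=
  hA.1.eigenvectorUnitary.1 * Matrix.diagonal ((↑) ∘ (Real.sqrt ∘ hA.1.eigenvalues)) *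
    (star hA.1.eigenvectorUnitary : Matrix n n 𝕜)

end Matrix.PosSemidef

namespace Matrix

variable {n : Type*} [Fintype n] [DecidableEq n]

namespace PosSemidef

variable {𝕜 : Type*} [RCLike 𝕜] {A : Matrix n n 𝕜} (hA : A.PosSemidef)

include hA

lemma sqrt_eq_conjStarAlgAut :
    hA.sqrt = Unitary.conjStarAlgAut 𝕜 _ hA.1.eigenvectorUnitary
      (diagonal ((↑) ∘ (Real.sqrt ∘ hA.1.eigenvalues))) := by
  rw [Unitary.conjStarAlgAut_apply]; rfl

lemma posSemidef_sqrt : hA.sqrt.PosSemidef := by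
  have hD : (diagonal (((↑) : ℝ → 𝕜) ∘ (Real.sqrt ∘ hA.1.eigenvalues))).PosSemidef :=
    posSemidef_diagonal_iff.2 fun i ↦ by simp [Real.sqrt_nonneg]
  simpa [sqrt, star_eq_conjTranspose] using hD.mul_mul_conjTranspose_same hA.1.eigenvectorUnitary.1

lemma sqrt_mul_self : hA.sqrt * hA.sqrt = A := by
  conv_rhs => rw [hA.1.spectral_theorem]
  rw [sqrt_eq_conjStarAlgAut, ← map_mul, diagonal_mul_diagonal]
  congr 2
  funext i
  simp [← RCLike.ofReal_mul, Real.mul_self_sqrt (hA.eigenvalues_nonneg i)]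

end PosSemidef

theorem spectrum_mul_comm {R 𝕜 : Type*} [Field R] [Field 𝕜] [Algebra R 𝕜] (A B : Matrix n n 𝕜) :
    spectrum R (A * B) = spectrum R (B * A) := by
  ext r
  rcases eq_or_ne r 0 with rfl | hr
  · simp only [spectrum.zero_mem_iff, isUnit_iff_isUnit_det, det_mul, mul_comm]
  · exact spectrum.unit_mem_mul_comm (r := Units.mk0 r hr)

theorem norm_conjTranspose_mul_self_sub_one (A : Matrix n n ℂ) :
    ‖Aᴴ * A - 1‖ = ‖A * Aᴴ - 1‖ := by
  have hspec : spectrum ℝ (Aᴴ * A - 1) = spectrum ℝ (A * Aᴴ - 1) := by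
    rw [← map_one (algebraMap ℝ (Matrix n n ℂ)), ← spectrum.sub_singleton_eq,
      ← spectrum.sub_singleton_eq, spectrum_mul_comm]
  have h₁ : IsSelfAdjoint (Aᴴ * A - 1) :=
    ((posSemidef_conjTranspose_mul_self A).isHermitian.sub isHermitian_one).isSelfAdjoint
  have h₂ : IsSelfAdjoint (A * Aᴴ - 1) :=
    ((posSemidef_self_mul_conjTranspose A).isHermitian.sub isHermitian_one).isSelfAdjoint
  rw [← h₁.toReal_spectralRadius_eq_norm, ← h₂.toReal_spectralRadius_eq_norm,
    spectralRadius, spectralRadius, hspec]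

theorem PosDef.norm_inv_le_inv_iInf_eigenvalues {A : Matrix n n ℂ} (hA : A.PosDef) :
    ‖A⁻¹‖ ≤ (⨅ i, hA.1.eigenvalues i)⁻¹ := by
  have hinv : cfc (fun x : ℝ ↦ x⁻¹) A = A⁻¹ := by
    simpa [coe_units_inv] using cfc_inv_id (R := ℝ) hA.isUnit.unit hA.1.isSelfAdjoint
  rw [← hinv]
  refine norm_cfc_le (inv_nonneg.2 (Real.iInf_nonneg fun i ↦ (hA.eigenvalues_pos i).le)) ?_
  rw [hA.1.spectrum_real_eq_range_eigenvalues]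
  rintro - ⟨i, rfl⟩
  have : Nonempty n := ⟨i⟩
  obtain ⟨j, hj⟩ := exists_eq_ciInf_of_finite (f := hA.1.eigenvalues)
  rw [Real.norm_eq_abs, abs_inv, abs_of_pos (hA.eigenvalues_pos i), ← hj]
  exact inv_anti₀ (hA.eigenvalues_pos j) (hj ▸ ciInf_le (Set.finite_range _).bddBelow i)

end Matrix

open Matrix

theorem sqrt_inv_sqrt_sub_one_norm_le_general {n : Type*} [Fintype n] [DecidableEq n]
    {X Y : Matrix n n ℂ} (hX : X.PosSemidef) (hY : Y.PosDef) :
    ‖hX.sqrt * Y⁻¹ * hX.sqrt - 1‖ ≤ (⨅ i, hY.1.eigenvalues i)⁻¹ * ‖X - Y‖ := by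
  have hYinv : Y⁻¹.PosSemidef := hY.inv.posSemidef
  set S := hX.sqrt
  set R := hYinv.sqrt
  have hS : Sᴴ = S := hX.posSemidef_sqrt.isHermitian
  have hR : Rᴴ = R := hYinv.posSemidef_sqrt.isHermitian
  have hRR : R * R = Y⁻¹ := hYinv.sqrt_mul_self
  have hRYR : R * Y * R = 1 := mul_eq_one_comm.mp <| by
    rw [← Matrix.mul_assoc, hRR, nonsing_inv_mul _ hY.det_pos.ne'.isUnit]
  calc ‖S * Y⁻¹ * S - 1‖ = ‖(R * S)ᴴ * (R * S) - 1‖ := by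
        rw [conjTranspose_mul, hS, hR, ← hRR]; simp only [Matrix.mul_assoc]
    _ = ‖(R * S) * (R * S)ᴴ - 1‖ := norm_conjTranspose_mul_self_sub_one _
    _ = ‖R * (X - Y) * R‖ := by
        rw [conjTranspose_mul, hS, hR, Matrix.mul_sub, Matrix.sub_mul, hRYR, ← hX.sqrt_mul_self]
        simp only [S, Matrix.mul_assoc]
    _ ≤ ‖R‖ * ‖X - Y‖ * ‖R‖ := norm_mul₃_le
    _ = ‖Y⁻¹‖ * ‖X - Y‖ := by
        rw [mul_right_comm, ← CStarRing.norm_star_mul_self, star_eq_conjTranspose, hR, hRR]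
    _ ≤ (⨅ i, hY.1.eigenvalues i)⁻¹ * ‖X - Y‖ := by
        gcongr; exact hY.norm_inv_le_inv_iInf_eigenvalues

/-- For `X ≥ 0` and `Y > 0` Hermitian matrices,
`‖X^{1/2} Y⁻¹ X^{1/2} - 𝟙‖ ≤ λ_min(Y)⁻¹ ‖X - Y‖` in the (L2) operator norm. -/
theorem sqrt_inv_sqrt_sub_one_norm_le {n : Type*} [Fintype n] [DecidableEq n] [Nonempty n]
    {X Y : Matrix n n ℂ} (hX : X.PosSemidef) (hY : Y.PosDef) :
    ‖hX.sqrt * Y⁻¹ * hX.sqrt - 1‖ ≤ (⨅ i, hY.1.eigenvalues i)⁻¹ * ‖X - Y‖ :=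
  sqrt_inv_sqrt_sub_one_norm_le_general hX hY
end

section
/- For two matrices A, B ∈ B(ℂ^D), e^A e^B = OExp[∫₀¹ (A + e^{tA} B e^{-tA}) dt], i.e., the product of the two exponentials equals the time-ordered exponential of the path t ↦ A + Γ_A^t(B), where Γ_A^t(B) = e^{tA} B e^{-tA}. -/
open MeasureTheory

/-- The `n`-th iterated ordered integral
`∫_{s ≥ t₁ ≥ ⋯ ≥ tₙ ≥ 0} O(t₁)⋯O(tₙ) dt₁⋯dtₙ` of an operator-valued path
`O : ℝ → B(ℂ^D)`. -/
noncomputable def orderedIntegral {D : ℕ}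
    (O : ℝ → (EuclideanSpace ℂ (Fin D) →L[ℂ] EuclideanSpace ℂ (Fin D))) :
    ℕ → ℝ → (EuclideanSpace ℂ (Fin D) →L[ℂ] EuclideanSpace ℂ (Fin D))
  | 0, _ => 1
  | n + 1, s => ∫ t in (0 : ℝ)..s, O t * orderedIntegral O n t

/-! The product `F s = e^{sA} e^{sB}` solves the linear equation `F' = (A + e^{sA} B e^{-sA}) F`
with `F 0 = 1`, and the series of ordered integrals is the Picard iteration for this equation.
Both the ordered integrals and the remainders of the partial sums satisfy the Volterra recursion
`g (n + 1) s = ∫₀ˢ O t g n t dt`, whence the bound `M (K s)ⁿ / n!`: the series converges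
absolutely and its sum is `F`. -/

open Set Finset NormedSpace
open scoped Nat

section Exponential

variable {𝔸 : Type*} [NormedRing 𝔸] [NormedAlgebra ℝ 𝔸] [CompleteSpace 𝔸]

theorem continuous_exp_smul (A : 𝔸) : Continuous fun t : ℝ => exp (t • A) :=
  (differentiable_exp_smul_const ℝ A).continuous

theorem exp_neg_mul_exp (A : 𝔸) : exp (-A) * exp A = 1 := by
  let : NormedAlgebra ℚ 𝔸 := .restrictScalars ℚ ℝ 𝔸
  rw [← exp_add_of_commute (Commute.refl A).neg_left, neg_add_cancel, exp_zero]

theorem hasDerivAt_exp_smul_mul_exp_smul (A B : 𝔸) (s : ℝ) :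
    HasDerivAt (fun t : ℝ => exp (t • A) * exp (t • B))
      ((A + exp (s • A) * B * exp (-(s • A))) * (exp (s • A) * exp (s • B))) s := by
  refine ((hasDerivAt_exp_smul_const' A s).mul (hasDerivAt_exp_smul_const' B s)).congr_deriv ?_
  have hinv := exp_neg_mul_exp (s • A)
  calc A * exp (s • A) * exp (s • B) + exp (s • A) * (B * exp (s • B))
      = A * (exp (s • A) * exp (s • B))
          + exp (s • A) * B * (exp (-(s • A)) * exp (s • A)) * exp (s • B) := by
        rw [hinv]; noncomm_ring
    _ = _ := by noncomm_ring

end Exponential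

theorem norm_le_pow_div_factorial_of_eq_integral {E : Type*} [NormedRing E] [NormedSpace ℝ E]
    {O : ℝ → E} {g : ℕ → ℝ → E} {K M T : ℝ} (hK : ∀ t ∈ Icc 0 T, ‖O t‖ ≤ K)
    (hM : ∀ t ∈ Icc 0 T, ‖g 0 t‖ ≤ M)
    (hg : ∀ n s, g (n + 1) s = ∫ t in (0 : ℝ)..s, O t * g n t) (n : ℕ) :
    ∀ s ∈ Icc 0 T, ‖g n s‖ ≤ M * ((K * s) ^ n / n !) := by
  induction n with
  | zero => simpa using hM
  | succ n ih =>
    intro s hs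
    have hbound : ∀ t ∈ Ioc 0 s, ‖O t * g n t‖ ≤ K * (M * ((K * t) ^ n / n !)) :=
      fun t ht => norm_mul_le_of_le (hK t ⟨ht.1.le, ht.2.trans hs.2⟩)
        (ih t ⟨ht.1.le, ht.2.trans hs.2⟩)
    calc ‖g (n + 1) s‖ ≤ ∫ t in (0 : ℝ)..s, K * (M * ((K * t) ^ n / n !)) := by
          rw [hg]
          exact intervalIntegral.norm_integral_le_of_norm_le hs.1 (ae_of_all _ hbound)
            (Continuous.intervalIntegrable (by fun_prop) _ _)
      _ = M * ((K * s) ^ (n + 1) / (n + 1)!) := by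
          simp only [mul_pow, mul_div_assoc, intervalIntegral.integral_const_mul,
            intervalIntegral.integral_div, integral_pow]
          push_cast [Nat.factorial_succ]
          field_simp
          ring

section OrderedIntegral

variable {D : ℕ} {O : ℝ → EuclideanSpace ℂ (Fin D) →L[ℂ] EuclideanSpace ℂ (Fin D)}

@[simp]
theorem orderedIntegral_zero (s : ℝ) : orderedIntegral O 0 s = 1 := rfl

theorem orderedIntegral_succ (n : ℕ) (s : ℝ) :
    orderedIntegral O (n + 1) s = ∫ t in (0 : ℝ)..s, O t * orderedIntegral O n t := rfl

theorem continuous_orderedIntegral (hO : Continuous O) (n : ℕ) :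
    Continuous (orderedIntegral O n) := by
  induction n with
  | zero => exact continuous_const
  | succ n ih =>
    exact intervalIntegral.continuous_primitive
      (fun a b => (hO.mul ih).intervalIntegrable a b) 0

theorem sum_range_succ_orderedIntegral (hO : Continuous O) (N : ℕ) (s : ℝ) :
    ∑ n ∈ range (N + 1), orderedIntegral O n s
      = 1 + ∫ t in (0 : ℝ)..s, O t * ∑ n ∈ range N, orderedIntegral O n t := by
  rw [sum_range_succ', orderedIntegral_zero, add_comm]
  congr 1
  simp_rw [mul_sum]
  exact (intervalIntegral.integral_finsetSum fun n _ =>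
    (hO.mul (continuous_orderedIntegral hO n)).intervalIntegrable _ _).symm

theorem hasSum_orderedIntegral_of_hasDerivAt (hO : Continuous O)
    {F : ℝ → EuclideanSpace ℂ (Fin D) →L[ℂ] EuclideanSpace ℂ (Fin D)}
    (hF : ∀ s, HasDerivAt F (O s * F s) s) (hF0 : F 0 = 1) {s : ℝ} (hs : 0 ≤ s) :
    HasSum (fun n => orderedIntegral O n s) (F s) := by
  have hFc : Continuous F := continuous_iff_continuousAt.2 fun t => (hF t).continuousAt
  obtain ⟨K, hK⟩ := isCompact_Icc.exists_bound_of_continuousOn (hO.continuousOn (s := Icc 0 s))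
  obtain ⟨M, hM⟩ := isCompact_Icc.exists_bound_of_continuousOn (hFc.continuousOn (s := Icc 0 s))
  have hFint : ∀ t, F t = 1 + ∫ u in (0 : ℝ)..t, O u * F u := fun t => by
    rw [intervalIntegral.integral_eq_sub_of_hasDerivAt (fun u _ => hF u)
      ((hO.mul hFc).intervalIntegrable _ _), hF0, add_sub_cancel]
  have herr : ∀ N t, F t - ∑ n ∈ range (N + 1), orderedIntegral O n t =
      ∫ u in (0 : ℝ)..t, O u * (F u - ∑ n ∈ range N, orderedIntegral O n u) := fun N t => by
    rw [sum_range_succ_orderedIntegral hO, hFint t, add_sub_add_left_eq_sub]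
    simp only [mul_sub]
    exact (intervalIntegral.integral_sub ((hO.mul hFc).intervalIntegrable _ _)
      ((hO.mul (continuous_finsetSum _ fun n _ =>
        continuous_orderedIntegral hO n)).intervalIntegrable _ _)).symm
  have hterm : ∀ n, ‖orderedIntegral O n s‖ ≤ 1 * ((K * s) ^ n / n !) := fun n =>
    norm_le_pow_div_factorial_of_eq_integral (g := orderedIntegral O) hK
      (fun _ _ => ContinuousLinearMap.norm_id_le) orderedIntegral_succ n s ⟨hs, le_rfl⟩
  have hrem : ∀ N,
      ‖F s - ∑ n ∈ range N, orderedIntegral O n s‖ ≤ M * ((K * s) ^ N / N !) :=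
    fun N => norm_le_pow_div_factorial_of_eq_integral
      (g := fun N t => F t - ∑ n ∈ range N, orderedIntegral O n t) hK (by simpa using hM) herr
      N s ⟨hs, le_rfl⟩
  rw [hasSum_iff_tendsto_nat_of_summable_norm
    ((Real.summable_pow_div_factorial (K * s)).of_nonneg_of_le (fun _ => norm_nonneg _)
      (by simpa using hterm))]
  refine tendsto_iff_norm_sub_tendsto_zero.2 (squeeze_zero (fun _ => norm_nonneg _)
    (fun N => (norm_sub_rev _ _).trans_le (hrem N)) ?_)
  simpa using (Real.summable_pow_div_factorial (K * s)).tendsto_atTop_zero.const_mul M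

end OrderedIntegral

/-- For `A, B ∈ B(ℂ^D)`,
`e^A e^B = OExp[∫₀¹ (A + e^{tA} B e^{-tA}) dt]`, i.e. the product of the two
exponentials is the time-ordered exponential of the path `t ↦ A + Γ_A^t(B)`
where `Γ_A^t(B) = e^{tA} B e^{-tA}`. -/
theorem exp_mul_exp_eq_expansional {D : ℕ}
    (A B : EuclideanSpace ℂ (Fin D) →L[ℂ] EuclideanSpace ℂ (Fin D)) :
    NormedSpace.exp A * NormedSpace.exp B =
      ∑' n, orderedIntegral
        (fun t => A + NormedSpace.exp (t • A) * B * NormedSpace.exp (-(t • A))) n 1 := by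
  have hO : Continuous fun t : ℝ => A + exp (t • A) * B * exp (-(t • A)) := by
    have := continuous_exp_smul (-A)
    simp only [smul_neg] at this
    exact continuous_const.add (((continuous_exp_smul A).mul continuous_const).mul this)
  have h := hasSum_orderedIntegral_of_hasDerivAt hO (hasDerivAt_exp_smul_mul_exp_smul A B)
    (by simp) zero_le_one
  simpa using h.tsum_eq.symm
end
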